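/- If a random vector X = (X_1,…,X_k) of discrete random variables and a weight function α : 2^{[k]} → [0,∞) satisfy ∑_{A ∋ i} α_A ≥ 1 for every i ∈ [k], then H(X) ≤ ∑_{A ⊆ [k]} α_A · H(X_A), where X_A = (X_i : i ∈ A) and H denotes base-2 Shannon entropy (Shearer's inequality). -/

import Mathlib

open Finset
open scoped Classical

/-- The probability of an event on a finite probability space with weights `w`. -/
noncomputable def prEvt {Ω : Type*} [Fintype Ω] (w : Ω → ℝ) (E : Ω → Prop) : ℝ :=
  ∑ ω ∈ Finset.univ.filter E, w ω

/-- Base-2 Shannon entropy of the random variable `X : Ω → S`. -/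
noncomputable def entRV {Ω S : Type*} [Fintype Ω] [Fintype S] (w : Ω → ℝ) (X : Ω → S) : ℝ :=
  ∑ s : S, -(prEvt w (fun ω => X ω = s)) * Real.logb 2 (prEvt w (fun ω => X ω = s))

namespace Shearer

noncomputable def F (x : ℝ) : ℝ := -x * Real.logb 2 x

lemma F_zero : F 0 = 0 := by simp [F]

lemma F_one : F 1 = 0 := by simp [F]

lemma F_mono_arg {a b : ℝ} (ha : 0 ≤ a) (hab : a ≤ b) : -a * Real.logb 2 b ≤ F a := by
  rcases ha.eq_or_lt with h | h
  · simp [← h, F]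
  · have : Real.logb 2 a ≤ Real.logb 2 b :=
      Real.logb_le_logb_of_le (by norm_num) h hab
    unfold F; nlinarith

lemma F_add_le {a b : ℝ} (ha : 0 ≤ a) (hb : 0 ≤ b) : F (a + b) ≤ F a + F b := by
  have h1 : -a * Real.logb 2 (a + b) ≤ F a := F_mono_arg ha (by linarith)
  have h2 : -b * Real.logb 2 (a + b) ≤ F b := F_mono_arg hb (by linarith)
  have : F (a + b) = -a * Real.logb 2 (a + b) + -b * Real.logb 2 (a + b) := by
    unfold F; ring
  linarith

lemma F_sum_le {ι : Type*} (s : Finset ι) (f : ι → ℝ) (hf : ∀ i ∈ s, 0 ≤ f i) :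
    F (∑ i ∈ s, f i) ≤ ∑ i ∈ s, F (f i) := by
  induction s using Finset.induction_on with
  | empty => simp [F_zero]
  | insert _ _ hni ih =>
    rename_i a s
    rw [Finset.sum_insert hni, Finset.sum_insert hni]
    have h1 : 0 ≤ f a := hf a (mem_insert_self a s)
    have h2 : 0 ≤ ∑ i ∈ s, f i :=
      Finset.sum_nonneg fun i hi => hf i (mem_insert_of_mem hi)
    calc F (f a + ∑ i ∈ s, f i) ≤ F (f a) + F (∑ i ∈ s, f i) := F_add_le h1 h2
      _ ≤ F (f a) + ∑ i ∈ s, F (f i) := by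
          have := ih fun i hi => hf i (mem_insert_of_mem hi); linarith


variable {Ω : Type*} [Fintype Ω] {w : Ω → ℝ}

lemma prEvt_eq_sum (E : Ω → Prop) : prEvt w E = ∑ ω, if E ω then w ω else 0 := by
  rw [prEvt, Finset.sum_filter]

lemma prEvt_nonneg (hw0 : ∀ ω, 0 ≤ w ω) (E : Ω → Prop) : 0 ≤ prEvt w E :=
  Finset.sum_nonneg fun ω _ => hw0 ω

lemma prEvt_congr {E E' : Ω → Prop} (h : ∀ ω, E ω ↔ E' ω) : prEvt w E = prEvt w E' := by
  unfold prEvt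
  congr 1
  exact Finset.filter_congr fun ω _ => h ω

lemma prEvt_false : prEvt w (fun _ => False) = 0 := by simp [prEvt]

lemma entRV_eq {S : Type*} [Fintype S] (X : Ω → S) :
    entRV w X = ∑ s, F (prEvt w (fun ω => X ω = s)) := rfl

lemma prEvt_comp {S T : Type*} [Fintype S] [Fintype T] (X : Ω → S) (f : S → T) (t : T) :
    prEvt w (fun ω => f (X ω) = t)
      = ∑ s ∈ univ.filter (fun s => f s = t), prEvt w (fun ω => X ω = s) := by
  rw [Finset.sum_filter]
  simp only [prEvt_eq_sum]
  have hpush : ∀ x : S, (if f x = t then ∑ ω, (if X ω = x then w ω else 0) else 0)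
      = ∑ ω, (if f x = t then (if X ω = x then w ω else 0) else 0) := by
    intro x; split <;> simp
  rw [Finset.sum_congr rfl fun x _ => hpush x, Finset.sum_comm]
  refine Finset.sum_congr rfl fun ω _ => ?_
  have h : ∀ s, (if f s = t then (if X ω = s then w ω else 0) else 0)
       = (if X ω = s then (if f s = t then w ω else 0) else 0) := by
    intro s; by_cases h1 : f s = t <;> by_cases h2 : X ω = s <;> simp [h1, h2]
  rw [Finset.sum_congr rfl (fun s _ => h s), Finset.sum_ite_eq]
  simp

lemma sum_prEvt {S : Type*} [Fintype S] (X : Ω → S) :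
    ∑ s, prEvt w (fun ω => X ω = s) = ∑ ω, w ω := by
  simp only [prEvt_eq_sum]
  rw [Finset.sum_comm]
  refine Finset.sum_congr rfl fun ω _ => ?_
  rw [Finset.sum_ite_eq]; simp

lemma entRV_comp_le {S T : Type*} [Fintype S] [Fintype T] (hw0 : ∀ ω, 0 ≤ w ω)
    (X : Ω → S) (f : S → T) :
    entRV w (fun ω => f (X ω)) ≤ entRV w X := by
  rw [entRV_eq, entRV_eq]
  rw [← Finset.sum_fiberwise univ f (fun s => F (prEvt w (fun ω => X ω = s)))]
  refine Finset.sum_le_sum fun t _ => ?_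
  rw [prEvt_comp X f t]
  exact F_sum_le _ _ fun s _ => prEvt_nonneg hw0 _

lemma entRV_comp_inj {S T : Type*} [Fintype S] [Fintype T] (X : Ω → S) {f : S → T}
    (hf : Function.Injective f) :
    entRV w (fun ω => f (X ω)) = entRV w X := by
  rw [entRV_eq, entRV_eq]
  have h0 : ∀ t ∈ (univ : Finset T), t ∉ univ.image f →
      F (prEvt w (fun ω => f (X ω) = t)) = 0 := by
    intro t _ ht
    have h1 : prEvt w (fun ω => f (X ω) = t) = prEvt w (fun _ => False) :=
      prEvt_congr fun ω => by
        simp only [iff_false]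
        exact fun h => ht (Finset.mem_image.2 ⟨X ω, Finset.mem_univ _, h⟩)
    rw [h1, prEvt_false, F_zero]
  rw [← Finset.sum_subset (Finset.subset_univ (univ.image f)) h0,
      Finset.sum_image (fun a _ b _ h => hf h)]
  exact Finset.sum_congr rfl fun s _ => by rw [prEvt_congr fun ω => hf.eq_iff]

lemma sum_comm3 {A B C : Type*} [Fintype A] [Fintype B] [Fintype C] (f : A → B → C → ℝ) :
    ∑ z : C, ∑ x : A, ∑ y : B, f x y z = ∑ x, ∑ y, ∑ z, f x y z := by
  rw [Finset.sum_comm]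
  exact Finset.sum_congr rfl fun x _ => Finset.sum_comm

lemma sum_comm3' {A B C : Type*} [Fintype A] [Fintype B] [Fintype C] (f : A → B → C → ℝ) :
    ∑ y : B, ∑ z : C, ∑ x : A, f x y z = ∑ x, ∑ y, ∑ z, f x y z := by
  calc ∑ y : B, ∑ z : C, ∑ x : A, f x y z = ∑ y : B, ∑ x : A, ∑ z : C, f x y z :=
        Finset.sum_congr rfl fun y _ => Finset.sum_comm
    _ = ∑ x, ∑ y, ∑ z, f x y z := Finset.sum_comm

lemma neg_sum_mul {ι : Type*} (s : Finset ι) (g : ι → ℝ) (c : ℝ) :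
    -(∑ i ∈ s, g i) * c = ∑ i ∈ s, -(g i) * c := by
  rw [← Finset.sum_neg_distrib, Finset.sum_mul]

lemma key {SX SY SZ : Type*} [Fintype SX] [Fintype SY] [Fintype SZ]
    (p : SX × SY × SZ → ℝ) (hp : ∀ s, 0 ≤ p s) :
    (∑ s, F (p s)) + (∑ z, F (∑ x, ∑ y, p (x, y, z)))
      ≤ (∑ x, ∑ z, F (∑ y, p (x, y, z))) + (∑ y, ∑ z, F (∑ x, p (x, y, z))) := by
  classical
  set L := Real.logb 2 with hL
  set pXZ := fun (x : SX) (z : SZ) => ∑ y, p (x, y, z) with hpXZ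
  set pYZ := fun (y : SY) (z : SZ) => ∑ x, p (x, y, z) with hpYZ
  set pZ := fun (z : SZ) => ∑ x, ∑ y, p (x, y, z) with hpZ
  have hpXZ0 : ∀ x z, 0 ≤ pXZ x z := fun x z => Finset.sum_nonneg fun _ _ => hp _
  have hpYZ0 : ∀ y z, 0 ≤ pYZ y z := fun y z => Finset.sum_nonneg fun _ _ => hp _
  have hpZ0 : ∀ z, 0 ≤ pZ z := fun z => Finset.sum_nonneg fun _ _ => hpXZ0 _ _
  have hle1 : ∀ x y z, p (x, y, z) ≤ pXZ x z := fun x y z =>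
    Finset.single_le_sum (f := fun y => p (x, y, z)) (fun _ _ => hp _) (mem_univ y)
  have hle2 : ∀ x y z, p (x, y, z) ≤ pYZ y z := fun x y z =>
    Finset.single_le_sum (f := fun x => p (x, y, z)) (fun _ _ => hp _) (mem_univ x)
  have hle3 : ∀ x y z, p (x, y, z) ≤ pZ z := fun x y z =>
    le_trans (hle1 x y z)
      (Finset.single_le_sum (f := fun x => pXZ x z) (fun _ _ => hpXZ0 _ _) (mem_univ x))
  -- rewrite the four entropy sums as triple sums
  have e0 : ∑ s, F (p s) = ∑ x, ∑ y, ∑ z, -(p (x, y, z)) * L (p (x, y, z)) := by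
    simp only [Fintype.sum_prod_type]; rfl
  have e1 : ∑ x, ∑ z, F (pXZ x z) = ∑ x, ∑ y, ∑ z, -(p (x, y, z)) * L (pXZ x z) := by
    refine Finset.sum_congr rfl fun x _ => ?_
    rw [Finset.sum_comm]
    exact Finset.sum_congr rfl fun z _ => by rw [F, hL, neg_sum_mul]
  have e2 : ∑ z, F (pZ z) = ∑ x, ∑ y, ∑ z, -(p (x, y, z)) * L (pZ z) := by
    rw [← sum_comm3]
    refine Finset.sum_congr rfl fun z _ => ?_
    rw [F, hL, neg_sum_mul]
    exact Finset.sum_congr rfl fun x _ => by rw [neg_sum_mul]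
  have e3 : ∑ y, ∑ z, F (pYZ y z) = ∑ x, ∑ y, ∑ z, -(p (x, y, z)) * L (pYZ y z) := by
    rw [← sum_comm3']
    refine Finset.sum_congr rfl fun y _ => Finset.sum_congr rfl fun z _ => ?_
    rw [F, hL, neg_sum_mul]
  -- the per-triple "conditional mutual information" term
  set T : SX × SY × SZ → ℝ := fun s =>
    p s * (L (p s) + L (pZ s.2.2) - L (pXZ s.1 s.2.2) - L (pYZ s.2.1 s.2.2)) with hT
  have expand : ∑ s, T s
      = ((∑ x, ∑ y, ∑ z, -(p (x, y, z)) * L (pXZ x z))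
          + ∑ x, ∑ y, ∑ z, -(p (x, y, z)) * L (pYZ y z))
        - ((∑ x, ∑ y, ∑ z, -(p (x, y, z)) * L (p (x, y, z)))
          + ∑ x, ∑ y, ∑ z, -(p (x, y, z)) * L (pZ z)) := by
    simp only [Fintype.sum_prod_type, ← Finset.sum_add_distrib, ← Finset.sum_sub_distrib]
    exact Finset.sum_congr rfl fun x _ => Finset.sum_congr rfl fun y _ =>
      Finset.sum_congr rfl fun z _ => by simp only [hT]; ring
  -- main positivity
  have main : 0 ≤ ∑ s, T s := by
    set R : SX × SY × SZ → ℝ := fun s => pXZ s.1 s.2.2 * pYZ s.2.1 s.2.2 / pZ s.2.2 with hR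
    have hTz : ∀ s ∈ (univ : Finset (SX × SY × SZ)), T s ≠ 0 → 0 < p s := by
      intro s _ h
      rcases (hp s).eq_or_lt with h0 | h0
      · exact absurd (by simp [hT, ← h0]) h
      · exact h0
    rw [← Finset.sum_filter_of_ne hTz]
    set supp := univ.filter (fun s : SX × SY × SZ => 0 < p s) with hsupp
    have hbound : ∀ s ∈ supp, (p s - R s) / Real.log 2 ≤ T s := by
      intro s hs
      have hps : 0 < p s := (Finset.mem_filter.1 hs).2
      obtain ⟨x, y, z⟩ := s
      have hXZ : 0 < pXZ x z := lt_of_lt_of_le hps (hle1 x y z)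
      have hYZ : 0 < pYZ y z := lt_of_lt_of_le hps (hle2 x y z)
      have hZ : 0 < pZ z := lt_of_lt_of_le hps (hle3 x y z)
      have hlog2 : 0 < Real.log 2 := Real.log_pos one_lt_two
      set U : ℝ := pXZ x z * pYZ y z / (p (x, y, z) * pZ z) with hU
      have hU0 : 0 < U := by positivity
      have hlogU : Real.log U
          = Real.log (pXZ x z) + Real.log (pYZ y z)
            - Real.log (p (x, y, z)) - Real.log (pZ z) := by
        rw [hU, Real.log_div (by positivity) (by positivity),
          Real.log_mul hXZ.ne' hYZ.ne', Real.log_mul hps.ne' hZ.ne']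
        ring
      have hTs : T (x, y, z) = -(p (x, y, z) / Real.log 2) * Real.log U := by
        simp only [hT, hL, Real.logb, hlogU]
        ring
      have hle : Real.log U ≤ U - 1 := Real.log_le_sub_one_of_pos hU0
      have hmul := mul_le_mul_of_nonneg_left hle (le_of_lt (div_pos hps hlog2))
      have hpu : p (x, y, z) * U = R (x, y, z) := by
        rw [hU, hR]
        field_simp
      have h2 : p (x, y, z) / Real.log 2 * (U - 1) = (R (x, y, z) - p (x, y, z)) / Real.log 2 := by
        rw [← hpu]; field_simp
      rw [hTs]
      rw [h2] at hmul
      have h3 : (p (x, y, z) - R (x, y, z)) / Real.log 2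
          = -((R (x, y, z) - p (x, y, z)) / Real.log 2) := by ring
      have h4 : -(p (x, y, z) / Real.log 2) * Real.log U
          = -(p (x, y, z) / Real.log 2 * Real.log U) := by ring
      rw [h3, h4]
      exact neg_le_neg hmul
    have hA : ∑ s ∈ supp, p s = ∑ s, p s := by
      rw [hsupp]
      exact Finset.sum_filter_of_ne fun s _ h => (hp s).lt_of_ne (Ne.symm h)
    have hB : ∑ s ∈ supp, R s ≤ ∑ s, p s := by
      have hsub : supp ⊆ univ.filter (fun s : SX × SY × SZ => 0 < pZ s.2.2) := by
        intro s hs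
        exact Finset.mem_filter.2 ⟨mem_univ _, lt_of_lt_of_le (Finset.mem_filter.1 hs).2
          (by obtain ⟨x, y, z⟩ := s; exact hle3 x y z)⟩
      calc ∑ s ∈ supp, R s ≤ ∑ s ∈ univ.filter (fun s : SX × SY × SZ => 0 < pZ s.2.2), R s := by
            refine Finset.sum_le_sum_of_subset_of_nonneg hsub fun s hs _ => ?_
            have hZ : 0 < pZ s.2.2 := (Finset.mem_filter.1 hs).2
            exact div_nonneg (mul_nonneg (hpXZ0 _ _) (hpYZ0 _ _)) (le_of_lt hZ)
        _ = ∑ z, pZ z := by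
            rw [Finset.sum_filter]
            simp only [Fintype.sum_prod_type]
            rw [← sum_comm3 (f := fun x y z => if 0 < pZ z then R (x, y, z) else 0)]
            refine Finset.sum_congr rfl fun z _ => ?_
            by_cases h : 0 < pZ z
            · simp only [if_pos h]
              have hx : ∑ x, pXZ x z = pZ z := rfl
              have hy : ∑ y, pYZ y z = pZ z := Finset.sum_comm
              calc ∑ x, ∑ y, R (x, y, z) = ∑ x, ∑ y, pXZ x z * pYZ y z / pZ z := rfl
                _ = ∑ x, pXZ x z * (∑ y, pYZ y z) / pZ z := by
                    refine Finset.sum_congr rfl fun x _ => ?_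
                    rw [← Finset.sum_div, ← Finset.mul_sum]
                _ = (∑ x, pXZ x z) * pZ z / pZ z := by
                    rw [hy, ← Finset.sum_div, ← Finset.sum_mul]
                _ = pZ z := by rw [hx, mul_div_assoc, div_self h.ne', mul_one]
            · simp only [if_neg h]
              have h0 : pZ z = 0 := le_antisymm (not_lt.1 h) (hpZ0 z)
              simp [h0]
        _ = ∑ s, p s := by
            simp only [Fintype.sum_prod_type]
            exact sum_comm3 (f := fun x y z => p (x, y, z))
    calc (0:ℝ) ≤ (∑ s ∈ supp, p s - ∑ s ∈ supp, R s) / Real.log 2 := by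
          apply div_nonneg _ (le_of_lt (Real.log_pos one_lt_two))
          rw [hA]; linarith [hB]
      _ = ∑ s ∈ supp, (p s - R s) / Real.log 2 := by
          rw [← Finset.sum_sub_distrib, Finset.sum_div]
      _ ≤ ∑ s ∈ supp, T s := Finset.sum_le_sum hbound
  rw [e0, e2, e1, e3]
  linarith [main, expand, main.trans_eq expand]

lemma prEvt_fiber {Ω : Type*} [Fintype Ω] {w : Ω → ℝ} {T : Type*} [Fintype T]
    (E : Ω → Prop) (g : Ω → T) :
    prEvt w E = ∑ t, prEvt w (fun ω => E ω ∧ g ω = t) := by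
  classical
  unfold prEvt
  rw [← Finset.sum_fiberwise (Finset.univ.filter E) g w]
  refine Finset.sum_congr rfl fun t _ => Finset.sum_congr ?_ fun _ _ => rfl
  ext ω
  simp only [Finset.mem_filter, Finset.mem_univ, true_and]

lemma submod {SX SY SZ : Type*} [Fintype SX] [Fintype SY] [Fintype SZ]
    (hw0 : ∀ ω, 0 ≤ w ω) (X : Ω → SX) (Y : Ω → SY) (Z : Ω → SZ) :
    entRV w (fun ω => (X ω, Y ω, Z ω)) + entRV w Z
      ≤ entRV w (fun ω => (X ω, Z ω)) + entRV w (fun ω => (Y ω, Z ω)) := by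
  classical
  set p : SX × SY × SZ → ℝ := fun s => prEvt w (fun ω => (X ω, Y ω, Z ω) = s) with hp'
  have hp : ∀ s, 0 ≤ p s := fun s => prEvt_nonneg hw0 _
  have margXZ : ∀ x z, prEvt w (fun ω => (X ω, Z ω) = (x, z)) = ∑ y, p (x, y, z) := by
    intro x z
    rw [prEvt_fiber (fun ω => (X ω, Z ω) = (x, z)) Y]
    exact Finset.sum_congr rfl fun y _ => prEvt_congr fun ω => by
      simp only [Prod.ext_iff]; tauto
  have margYZ : ∀ y z, prEvt w (fun ω => (Y ω, Z ω) = (y, z)) = ∑ x, p (x, y, z) := by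
    intro y z
    rw [prEvt_fiber (fun ω => (Y ω, Z ω) = (y, z)) X]
    exact Finset.sum_congr rfl fun x _ => prEvt_congr fun ω => by
      simp only [Prod.ext_iff]; tauto
  have margZ : ∀ z, prEvt w (fun ω => Z ω = z) = ∑ x, ∑ y, p (x, y, z) := by
    intro z
    rw [prEvt_fiber (fun ω => Z ω = z) X]
    refine Finset.sum_congr rfl fun x _ => ?_
    rw [show prEvt w (fun ω => Z ω = z ∧ X ω = x) = prEvt w (fun ω => (X ω, Z ω) = (x, z)) from
      prEvt_congr fun ω => by simp only [Prod.ext_iff]; tauto]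
    exact margXZ x z
  have e1 : entRV w (fun ω => (X ω, Y ω, Z ω)) = ∑ s, F (p s) := entRV_eq _
  have e2 : entRV w Z = ∑ z, F (∑ x, ∑ y, p (x, y, z)) := by
    rw [entRV_eq]
    exact Finset.sum_congr rfl fun z _ => by rw [margZ z]
  have e3 : entRV w (fun ω => (X ω, Z ω)) = ∑ x, ∑ z, F (∑ y, p (x, y, z)) := by
    rw [entRV_eq, Fintype.sum_prod_type]
    exact Finset.sum_congr rfl fun x _ => Finset.sum_congr rfl fun z _ => by rw [margXZ x z]
  have e4 : entRV w (fun ω => (Y ω, Z ω)) = ∑ y, ∑ z, F (∑ x, p (x, y, z)) := by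
    rw [entRV_eq, Fintype.sum_prod_type]
    exact Finset.sum_congr rfl fun y _ => Finset.sum_congr rfl fun z _ => by rw [margYZ y z]
  rw [e1, e2, e3, e4]
  exact key p hp

variable {Ω V : Type*} [Fintype Ω] [Fintype V] {w : Ω → ℝ} {k : ℕ}

noncomputable def hEnt (w : Ω → ℝ) (X : Fin k → Ω → V) (A : Finset (Fin k)) : ℝ :=
  entRV w (fun ω => (fun i : {i // i ∈ A} => X i ω))

lemma prEvt_true (hw1 : ∑ ω, w ω = 1) : prEvt w (fun _ => True) = 1 := by
  rw [prEvt]; simpa using hw1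

lemma hEnt_empty (hw1 : ∑ ω, w ω = 1) (X : Fin k → Ω → V) : hEnt w X (∅ : Finset (Fin k)) = 0 := by
  haveI : IsEmpty {i // i ∈ (∅ : Finset (Fin k))} := ⟨fun i => Finset.notMem_empty i.1 i.2⟩
  rw [hEnt, entRV_eq, Fintype.sum_unique]
  have h : prEvt w (fun ω => (fun i : {i // i ∈ (∅ : Finset (Fin k))} => X i ω) = default) = 1 := by
    rw [prEvt_congr (E' := fun _ => True) fun ω => by simp [Subsingleton.elim _ (default)]]
    exact prEvt_true hw1
  rw [h, F_one]

lemma hEnt_mono (hw0 : ∀ ω, 0 ≤ w ω) (X : Fin k → Ω → V) {B A : Finset (Fin k)} (hBA : B ⊆ A) :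
    hEnt w X B ≤ hEnt w X A :=
  entRV_comp_le hw0 (fun ω => (fun i : {i // i ∈ A} => X i ω))
    (fun f (j : {i // i ∈ B}) => f ⟨j.1, hBA j.2⟩)

lemma hEnt_submod (hw0 : ∀ ω, 0 ≤ w ω) (X : Fin k → Ω → V) {A B : Finset (Fin k)} {i : Fin k}
    (hiA : i ∉ A) (hBA : B ⊆ A) :
    hEnt w X (insert i A) + hEnt w X B ≤ hEnt w X (insert i B) + hEnt w X A := by
  have h := submod hw0 (fun ω => X i ω) (fun ω => (fun j : {j // j ∈ A} => X j ω))
    (fun ω => (fun j : {j // j ∈ B} => X j ω))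
  have eIA : entRV w (fun ω => (X i ω, (fun j : {j // j ∈ A} => X j ω), (fun j : {j // j ∈ B} => X j ω)))
      = hEnt w X (insert i A) := by
    refine entRV_comp_inj (fun ω => (fun j : {j // j ∈ insert i A} => X j ω))
      (f := fun f => (f ⟨i, Finset.mem_insert_self i A⟩,
        fun j : {j // j ∈ A} => f ⟨j.1, Finset.mem_insert_of_mem j.2⟩,
        fun j : {j // j ∈ B} => f ⟨j.1, Finset.mem_insert_of_mem (hBA j.2)⟩)) ?_
    intro f f' hff
    funext j
    rcases Finset.mem_insert.1 j.2 with hj | hj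
    · have h1 := congrArg Prod.fst hff
      have : j = ⟨i, Finset.mem_insert_self i A⟩ := Subtype.ext hj
      rw [this]; exact h1
    · have h2 := congrFun (congrArg (Prod.fst ∘ Prod.snd) hff) ⟨j.1, hj⟩
      exact h2
  have eIB : entRV w (fun ω => (X i ω, (fun j : {j // j ∈ B} => X j ω)))
      = hEnt w X (insert i B) := by
    refine entRV_comp_inj (fun ω => (fun j : {j // j ∈ insert i B} => X j ω))
      (f := fun f => (f ⟨i, Finset.mem_insert_self i B⟩,
        fun j : {j // j ∈ B} => f ⟨j.1, Finset.mem_insert_of_mem j.2⟩)) ?_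
    intro f f' hff
    funext j
    rcases Finset.mem_insert.1 j.2 with hj | hj
    · have h1 := congrArg Prod.fst hff
      have : j = ⟨i, Finset.mem_insert_self i B⟩ := Subtype.ext hj
      rw [this]; exact h1
    · exact congrFun (congrArg Prod.snd hff) ⟨j.1, hj⟩
  have eA : entRV w (fun ω => ((fun j : {j // j ∈ A} => X j ω), (fun j : {j // j ∈ B} => X j ω)))
      = hEnt w X A := by
    refine entRV_comp_inj (fun ω => (fun j : {j // j ∈ A} => X j ω))
      (f := fun f => (f, fun j : {j // j ∈ B} => f ⟨j.1, hBA j.2⟩)) ?_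
    intro f f' hff
    exact congrArg Prod.fst hff
  have eB : entRV w (fun ω => (fun j : {j // j ∈ B} => X j ω)) = hEnt w X B := rfl
  rw [eIA, eIB, eA, eB] at h
  linarith

lemma tele (hw1 : ∑ ω, w ω = 1) (X : Fin k → Ω → V) (A : Finset (Fin k)) :
    hEnt w X A = ∑ i ∈ A, (hEnt w X (A.filter (fun j => j ≤ i)) - hEnt w X (A.filter (fun j => j < i))) := by
  induction A using Finset.strongInduction with
  | _ A ih =>
    rcases A.eq_empty_or_nonempty with rfl | hA
    · simp [hEnt_empty hw1]
    · set m := A.max' hA with hm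
      have hmA : m ∈ A := A.max'_mem hA
      have hfle : A.filter (fun j => j ≤ m) = A := by
        apply Finset.filter_true_of_mem
        intro j hj; exact A.le_max' j hj
      have hflt : A.filter (fun j => j < m) = A.erase m := by
        ext j
        simp only [Finset.mem_filter, Finset.mem_erase]
        constructor
        · rintro ⟨hj, hlt⟩; exact ⟨ne_of_lt hlt, hj⟩
        · rintro ⟨hne, hj⟩; exact ⟨hj, lt_of_le_of_ne (A.le_max' j hj) hne⟩
      rw [← Finset.add_sum_erase A _ hmA, hfle, hflt]
      have herase : ∑ i ∈ A.erase m,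
          (hEnt w X (A.filter (fun j => j ≤ i)) - hEnt w X (A.filter (fun j => j < i)))
          = ∑ i ∈ A.erase m, (hEnt w X ((A.erase m).filter (fun j => j ≤ i))
              - hEnt w X ((A.erase m).filter (fun j => j < i))) := by
        refine Finset.sum_congr rfl fun i hi => ?_
        have him : i < m := lt_of_le_of_ne (A.le_max' i (Finset.mem_of_mem_erase hi))
          (Finset.ne_of_mem_erase hi)
        have h1 : A.filter (fun j => j ≤ i) = (A.erase m).filter (fun j => j ≤ i) := by
          ext j
          simp only [Finset.mem_filter, Finset.mem_erase]
          constructor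
          · rintro ⟨hj, hle⟩; exact ⟨⟨ne_of_lt (lt_of_le_of_lt hle him), hj⟩, hle⟩
          · rintro ⟨⟨_, hj⟩, hle⟩; exact ⟨hj, hle⟩
        have h2 : A.filter (fun j => j < i) = (A.erase m).filter (fun j => j < i) := by
          ext j
          simp only [Finset.mem_filter, Finset.mem_erase]
          constructor
          · rintro ⟨hj, hlt⟩; exact ⟨⟨ne_of_lt (lt_trans hlt him), hj⟩, hlt⟩
          · rintro ⟨⟨_, hj⟩, hlt⟩; exact ⟨hj, hlt⟩
        rw [h1, h2]
      rw [herase, ← ih (A.erase m) (Finset.erase_ssubset hmA)]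
      ring

lemma chain (hw0 : ∀ ω, 0 ≤ w ω) (hw1 : ∑ ω, w ω = 1) (X : Fin k → Ω → V) (A : Finset (Fin k)) :
    ∑ i ∈ A, (hEnt w X (univ.filter (fun j => j ≤ i)) - hEnt w X (univ.filter (fun j => j < i)))
      ≤ hEnt w X A := by
  rw [tele hw1 X A]
  refine Finset.sum_le_sum fun i hi => ?_
  have h1 : (univ : Finset (Fin k)).filter (fun j => j ≤ i)
      = insert i (univ.filter (fun j => j < i)) := by
    ext j
    simp only [Finset.mem_filter, Finset.mem_univ, true_and, Finset.mem_insert]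
    constructor
    · intro h
      rcases lt_or_eq_of_le h with hlt | rfl
      · exact Or.inr hlt
      · exact Or.inl rfl
    · rintro (rfl | hlt)
      · exact le_refl _
      · exact le_of_lt hlt
  have h2 : A.filter (fun j => j ≤ i) = insert i (A.filter (fun j => j < i)) := by
    ext j
    simp only [Finset.mem_filter, Finset.mem_insert]
    constructor
    · rintro ⟨hj, hle⟩
      rcases lt_or_eq_of_le hle with hlt | rfl
      · exact Or.inr ⟨hj, hlt⟩
      · exact Or.inl rfl
    · rintro (rfl | ⟨hj, hlt⟩)
      · exact ⟨hi, le_refl _⟩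
      · exact ⟨hj, le_of_lt hlt⟩
  rw [h1, h2]
  have hs := hEnt_submod hw0 X (A := univ.filter (fun j => j < i)) (B := A.filter (fun j => j < i))
    (i := i) (by simp) (fun j hj => by
      simp only [Finset.mem_filter, Finset.mem_univ, true_and]
      exact (Finset.mem_filter.1 hj).2)
  linarith

end Shearer

/-- Shearer's inequality: If `α : 2^{[k]} → [0,∞)` is a fractional cover,
i.e. `∑_{A ∋ i} α A ≥ 1` for every `i`, then
`H(X₁,…,X_k) ≤ ∑_{A ⊆ [k]} α A · H(X_A)`. -/
theorem stmt12 {Ω V : Type*} [Fintype Ω] [Fintype V] (k : ℕ)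
    (w : Ω → ℝ) (hw0 : ∀ ω, 0 ≤ w ω) (hw1 : ∑ ω, w ω = 1)
    (X : Fin k → Ω → V) (α : Finset (Fin k) → ℝ)
    (hα0 : ∀ A, 0 ≤ α A)
    (hcov : ∀ i : Fin k, 1 ≤ ∑ A ∈ Finset.univ.filter (fun A : Finset (Fin k) => i ∈ A), α A) :
    entRV w (fun ω => (fun i : Fin k => X i ω)) ≤
      ∑ A : Finset (Fin k), α A * entRV w (fun ω => (fun i : {i // i ∈ A} => X i ω)) := by
  have hfull : entRV w (fun ω => (fun i : Fin k => X i ω)) = Shearer.hEnt w X Finset.univ := by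
    refine (Shearer.entRV_comp_inj (fun ω => (fun i : Fin k => X i ω))
      (f := fun (f : Fin k → V) (j : {i // i ∈ (Finset.univ : Finset (Fin k))}) => f j.1) ?_).symm
    intro f f' hff
    funext i
    exact congrFun hff ⟨i, Finset.mem_univ i⟩
  rw [hfull, Shearer.tele hw1 X Finset.univ]
  calc ∑ i ∈ univ, (Shearer.hEnt w X (univ.filter (fun j => j ≤ i))
        - Shearer.hEnt w X (univ.filter (fun j => j < i)))
      ≤ ∑ i ∈ univ, (∑ A ∈ univ.filter (fun A : Finset (Fin k) => i ∈ A), α A) *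
          (Shearer.hEnt w X (univ.filter (fun j => j ≤ i))
            - Shearer.hEnt w X (univ.filter (fun j => j < i))) := by
        refine Finset.sum_le_sum fun i _ => ?_
        have hpos : 0 ≤ Shearer.hEnt w X (univ.filter (fun j => j ≤ i))
            - Shearer.hEnt w X (univ.filter (fun j => j < i)) :=
          sub_nonneg.2 (Shearer.hEnt_mono hw0 X (fun j hj => by
            simp only [Finset.mem_filter, Finset.mem_univ, true_and] at *
            exact le_of_lt hj))
        exact le_mul_of_one_le_left hpos (hcov i)
    _ = ∑ i ∈ univ, ∑ A ∈ univ.filter (fun A : Finset (Fin k) => i ∈ A),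
          α A * (Shearer.hEnt w X (univ.filter (fun j => j ≤ i))
            - Shearer.hEnt w X (univ.filter (fun j => j < i))) :=
        Finset.sum_congr rfl fun i _ => Finset.sum_mul _ _ _
    _ = ∑ A : Finset (Fin k), ∑ i ∈ A,
          α A * (Shearer.hEnt w X (univ.filter (fun j => j ≤ i))
            - Shearer.hEnt w X (univ.filter (fun j => j < i))) := by
        simp only [Finset.sum_filter]
        rw [Finset.sum_comm]
        refine Finset.sum_congr rfl fun A _ => ?_
        rw [← Finset.sum_filter]
        refine Finset.sum_congr ?_ fun _ _ => rfl
        ext i; simp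
    _ = ∑ A : Finset (Fin k), α A * ∑ i ∈ A,
          (Shearer.hEnt w X (univ.filter (fun j => j ≤ i))
            - Shearer.hEnt w X (univ.filter (fun j => j < i))) :=
        Finset.sum_congr rfl fun A _ => (Finset.mul_sum _ _ _).symm
    _ ≤ ∑ A : Finset (Fin k), α A * Shearer.hEnt w X A :=
        Finset.sum_le_sum fun A _ => mul_le_mul_of_nonneg_left (Shearer.chain hw0 hw1 X A) (hα0 A)
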